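/- Suppose (G, E, φ) is pseudo free. Then the standard action of S_{G,E} on E^∞ is topologically free if and only if the following two conditions hold: (1) every G-circuit has an entry; (2) for every g ∈ G with g ≠ 1 and every vertex x ∈ E⁰, there is at least one ζ ∈ Z(x) with g·ζ ≠ ζ. -/

import Mathlib

/-- Finite paths in a directed graph: `Pth.nil x` is the length-zero path at the
vertex `x`, and `Pth.cons e p` is the path whose first edge is `e`, followed by `p`. -/
inductive Pth (V : Type) (Ed : Type) : Type where
  | nil : V → Pth V Ed
  | cons : Ed → Pth V Ed → Pth V Ed

/-- A self-similar graph `(G, E, φ)`: a group `G` acting on a directed graph `E`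
(with vertex set `V`, edge set `Ed`, range `r` and source `d`) by graph
automorphisms, together with a one-cocycle `φ : G × E¹ → G` for the action on
edges, satisfying `φ(g,e)·x = g·x` for all vertices `x`. -/
structure SelfSimGraph (G V Ed : Type) [Group G] : Type where
  r : Ed → V
  d : Ed → V
  actV : G → V → V
  actE : G → Ed → Ed
  actV_one : ∀ x, actV 1 x = x
  actV_mul : ∀ g h x, actV (g * h) x = actV g (actV h x)
  actE_one : ∀ e, actE 1 e = e
  actE_mul : ∀ g h e, actE (g * h) e = actE g (actE h e)
  r_act : ∀ g e, r (actE g e) = actV g (r e)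
  d_act : ∀ g e, d (actE g e) = actV g (d e)
  phi : G → Ed → G
  phi_cocycle : ∀ g h e, phi (g * h) e = phi g (actE h e) * phi h e
  phi_vertex : ∀ g e x, actV (phi g e) x = actV g x

variable {G V Ed : Type} [Group G]

/-- The range `r(α)` of a finite path. -/
def rngP (S : SelfSimGraph G V Ed) : Pth V Ed → V
  | Pth.nil x => x
  | Pth.cons e _ => S.r e

/-- The source `d(α)` of a finite path. -/
def srcP (S : SelfSimGraph G V Ed) : Pth V Ed → V
  | Pth.nil x => x
  | Pth.cons _ p => srcP S p

/-- Well-formedness of a finite path: consecutive edges match, `d(αᵢ) = r(αᵢ₊₁)`. -/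
def WFP (S : SelfSimGraph G V Ed) : Pth V Ed → Prop
  | Pth.nil _ => True
  | Pth.cons e p => S.d e = rngP S p ∧ WFP S p

/-- The length of a finite path. -/
def lenP : Pth V Ed → ℕ
  | Pth.nil _ => 0
  | Pth.cons _ p => lenP p + 1

/-- Concatenation `αβ` of finite paths (meaningful when `d(α) = r(β)`). -/
def compP : Pth V Ed → Pth V Ed → Pth V Ed
  | Pth.nil _, q => q
  | Pth.cons e p, q => Pth.cons e (compP p q)

/-- The action of `G` extended to finite paths:
`g·x = g·x` on vertices and `g·(eα) = (g·e)(φ(g,e)·α)`. -/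
def actP (S : SelfSimGraph G V Ed) : G → Pth V Ed → Pth V Ed
  | g, Pth.nil x => Pth.nil (S.actV g x)
  | g, Pth.cons e p => Pth.cons (S.actE g e) (actP S (S.phi g e) p)

/-- The cocycle extended to finite paths:
`φ(g,x) = g` on vertices and `φ(g, eα) = φ(φ(g,e), α)`. -/
def phiP (S : SelfSimGraph G V Ed) : G → Pth V Ed → G
  | g, Pth.nil _ => g
  | g, Pth.cons e p => phiP S (S.phi g e) p

/-- A path `τ` is strongly fixed by `g` if `g·τ = τ` and `φ(g,τ) = 1`. -/
def StronglyFixed (S : SelfSimGraph G V Ed) (g : G) (τ : Pth V Ed) : Prop :=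
  WFP S τ ∧ actP S g τ = τ ∧ phiP S g τ = 1

/-- `(G,E,φ)` is pseudo free if `g·e = e` and `φ(g,e) = 1` imply `g = 1`. -/
def PseudoFree (S : SelfSimGraph G V Ed) : Prop :=
  ∀ (g : G) (e : Ed), S.actE g e = e → S.phi g e = 1 → g = 1

/-- `p` is a prefix (initial segment) of `q`: `q = pε` for some path `ε`. -/
def IsPrefixP (S : SelfSimGraph G V Ed) (p q : Pth V Ed) : Prop :=
  ∃ ε, WFP S ε ∧ rngP S ε = srcP S p ∧ compP p ε = q

/-- The set `M_g` of minimal strongly fixed paths for `g`: strongly fixed paths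
none of whose proper prefixes is strongly fixed. -/
def MinSF (S : SelfSimGraph G V Ed) (g : G) : Set (Pth V Ed) :=
  {μ | StronglyFixed S g μ ∧ ∀ p, IsPrefixP S p μ → p ≠ μ → ¬StronglyFixed S g p}

/-- Well-formedness of an infinite path, viewed as a sequence of edges:
`d(ξᵢ) = r(ξᵢ₊₁)`. -/
def InfWF (S : SelfSimGraph G V Ed) (ξ : ℕ → Ed) : Prop :=
  ∀ i, S.d (ξ i) = S.r (ξ (i + 1))

/-- The range `r(ξ)` of an infinite path. -/
def rngInf (S : SelfSimGraph G V Ed) (ξ : ℕ → Ed) : V := S.r (ξ 0)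

/-- `takeP S ξ n` is the finite path `ξ|ₙ = ξ₁⋯ξₙ` (with `ξ|₀ = r(ξ₁)`). -/
def takeP (S : SelfSimGraph G V Ed) : (ℕ → Ed) → ℕ → Pth V Ed
  | ξ, 0 => Pth.nil (S.r (ξ 0))
  | ξ, n + 1 => Pth.cons (ξ 0) (takeP S (fun i => ξ (i + 1)) n)

/-- Membership of an infinite path in the cylinder `Z(α)`:
the initial segment of `ξ` of length `|α|` equals `α`. -/
def InZ (S : SelfSimGraph G V Ed) (α : Pth V Ed) (ξ : ℕ → Ed) : Prop :=
  takeP S ξ (lenP α) = α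

/-- The infinite path `αξ` obtained by prepending a finite path to an infinite one. -/
def prepSeq : Pth V Ed → (ℕ → Ed) → ℕ → Ed
  | Pth.nil _, ξ, n => ξ n
  | Pth.cons e _, _, 0 => e
  | Pth.cons _ p, ξ, n + 1 => prepSeq p ξ n

/-- Dropping the first `k` edges of an infinite path. -/
def dropSeq (k : ℕ) (ξ : ℕ → Ed) : ℕ → Ed := fun n => ξ (n + k)

/-- The space `E^∞` of infinite paths. -/
def InfPath (S : SelfSimGraph G V Ed) : Type := {ξ : ℕ → Ed // InfWF S ξ}

/-- The topology of `E^∞`: the subspace topology induced from the product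
topology on `(E¹)^ℕ`, `E¹` being discrete.  Its basis consists of the
cylinders `Z(α)`. -/
def infTop (S : SelfSimGraph G V Ed) : TopologicalSpace (InfPath S) :=
  TopologicalSpace.induced (fun ξ => ξ.1)
    (@Pi.topologicalSpace ℕ (fun _ => Ed) (fun _ => ⊥))

/-- Specification of the (unique) action of `G` on `E^∞`: `(g·ξ)|ₙ = g·(ξ|ₙ)`. -/
def ActSpec (S : SelfSimGraph G V Ed) (act : G → (ℕ → Ed) → ℕ → Ed) : Prop :=
  ∀ (g : G) (ξ : ℕ → Ed) (n : ℕ), takeP S (act g ξ) n = actP S g (takeP S ξ n)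

/-- The action of a triple `s = (α, g, β) ∈ S_{G,E}` on `E^∞`: it sends
`βξ ∈ Z(β)` to `α(g·ξ)`. -/
def sActSeq (S : SelfSimGraph G V Ed) (act : G → (ℕ → Ed) → ℕ → Ed)
    (α : Pth V Ed) (g : G) (β : Pth V Ed) (ξ : ℕ → Ed) : ℕ → Ed :=
  prepSeq α (act g (dropSeq (lenP β) ξ))

/-- The set of fixed points in `E^∞` of the element `s = (α, g, β)` of `S_{G,E}`. -/
def FixSet (S : SelfSimGraph G V Ed) (act : G → (ℕ → Ed) → ℕ → Ed)
    (α : Pth V Ed) (g : G) (β : Pth V Ed) : Set (InfPath S) :=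
  {η | InZ S β η.1 ∧ sActSeq S act α g β η.1 = η.1}

/-- A vertex `x` is simple if `r⁻¹(x)` is a singleton. -/
def SimpleVtx (S : SelfSimGraph G V Ed) (x : V) : Prop := ∃! e : Ed, S.r e = x

/-- A path `γ = γ₁⋯γₙ` has no entry if `d(γᵢ)` is simple for every `i`. -/
def NoEntry (S : SelfSimGraph G V Ed) : Pth V Ed → Prop
  | Pth.nil _ => True
  | Pth.cons e p => SimpleVtx S (S.d e) ∧ NoEntry S p

/-- A circuit: a path `γ` of nonzero length with `d(γ) = r(γ)`. -/
def Circuit (S : SelfSimGraph G V Ed) (γ : Pth V Ed) : Prop :=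
  WFP S γ ∧ 1 ≤ lenP γ ∧ srcP S γ = rngP S γ

/-- A `G`-circuit: a pair `(g,γ)` with `γ` of nonzero length and `d(γ) = g·r(γ)`. -/
def GCircuit (S : SelfSimGraph G V Ed) (g : G) (γ : Pth V Ed) : Prop :=
  WFP S γ ∧ 1 ≤ lenP γ ∧ srcP S γ = S.actV g (rngP S γ)

/-- `g` is slack at `x` if all sufficiently long paths with range `x` are
strongly fixed by `g`. -/
def SlackAt (S : SelfSimGraph G V Ed) (g : G) (x : V) : Prop :=
  ∃ n : ℕ, ∀ γ, WFP S γ → rngP S γ = x → n ≤ lenP γ → StronglyFixed S g γ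

/-- The sequence `(γⁿ, gₙ)` attached to a `G`-circuit `(g, γ)`:
`γ¹ = γ`, `g₁ = g`, `γⁿ⁺¹ = gₙ·γⁿ`, `gₙ₊₁ = φ(gₙ, γⁿ)` (indexed from `0`). -/
def circIter (S : SelfSimGraph G V Ed) (g : G) (γ : Pth V Ed) : ℕ → Pth V Ed × G
  | 0 => (γ, g)
  | n + 1 =>
      (actP S (circIter S g γ n).2 (circIter S g γ n).1,
       phiP S (circIter S g γ n).2 (circIter S g γ n).1)

/-- The finite concatenation `γ¹γ²⋯γⁿ`. -/
def circConcat (S : SelfSimGraph G V Ed) (g : G) (γ : Pth V Ed) : ℕ → Pth V Ed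
  | 0 => Pth.nil (rngP S γ)
  | n + 1 => compP (circConcat S g γ n) (circIter S g γ n).1

/-- `ξ` is the infinite concatenation `ξ(g,γ) = γ¹γ²γ³⋯`: it is an infinite path
whose initial segments are the finite concatenations `γ¹⋯γⁿ`. -/
def IsCircPath (S : SelfSimGraph G V Ed) (g : G) (γ : Pth V Ed) (ξ : ℕ → Ed) : Prop :=
  InfWF S ξ ∧ ∀ n, takeP S ξ (lenP (circConcat S g γ n)) = circConcat S g γ n

/-- `x ⇀ y`: there is a finite path with source `x` and range `y`. -/
def RelPath (S : SelfSimGraph G V Ed) (x y : V) : Prop :=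
  ∃ α, WFP S α ∧ srcP S α = x ∧ rngP S α = y

/-- `x ∼ y`: `x` and `y` are in the same `G`-orbit. -/
def RelOrb (S : SelfSimGraph G V Ed) (x y : V) : Prop :=
  ∃ g : G, S.actV g x = y

/-- `x ≫ y`: there is a vertex `u` with `x ⇀ u ∼ y`. -/
def RelGG (S : SelfSimGraph G V Ed) (x y : V) : Prop :=
  ∃ u, RelPath S x u ∧ RelOrb S u y

/-- A nonzero element `(α, g, β)` of `S_{G,E}`: `α, β ∈ E*`, `g ∈ G`, with
`d(α) = g·d(β)`. -/
def SGETriple (S : SelfSimGraph G V Ed) : Type :=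
  {t : Pth V Ed × G × Pth V Ed //
    WFP S t.1 ∧ WFP S t.2.2 ∧ srcP S t.1 = S.actV t.2.1 (srcP S t.2.2)}

/-- The inverse semigroup `S_{G,E}` (as a set): the triples together with `0 = none`. -/
def SGE (S : SelfSimGraph G V Ed) : Type := Option (SGETriple S)

/-- Forget the membership proofs. -/
def sgeToRaw (S : SelfSimGraph G V Ed) : SGE S → Option (Pth V Ed × G × Pth V Ed) :=
  Option.map Subtype.val

/-- The adjoint: `(α, g, β)* = (β, g⁻¹, α)`, `0* = 0`. -/
def starSGE (S : SelfSimGraph G V Ed) : SGE S → SGE S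
  | none => none
  | some s =>
      some ⟨(s.1.2.2, s.1.2.1⁻¹, s.1.1),
        ⟨s.2.2.1, s.2.1, by
          rw [s.2.2.2, ← S.actV_mul, inv_mul_cancel, S.actV_one]⟩⟩

/-- The idempotent `f_α = (α, 1, α)`. -/
def fIdem (S : SelfSimGraph G V Ed) (α : Pth V Ed) (h : WFP S α) : SGE S :=
  some ⟨(α, 1, α), ⟨h, h, by rw [S.actV_one]⟩⟩

/-- Specification of the multiplication of `S_{G,E}`:
`0` is absorbing; `(α,g,β)(γ,h,δ) = (α(g·ε), φ(g,ε)h, δ)` if `γ = βε`;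
`(α,g,β)(γ,h,δ) = (α, gφ(h⁻¹,ε)⁻¹, δ(h⁻¹·ε))` if `β = γε`; `0` otherwise. -/
def MulSpec (S : SelfSimGraph G V Ed) (mul : SGE S → SGE S → SGE S) : Prop :=
  (∀ t, mul none t = none) ∧
  (∀ s, mul s none = none) ∧
  (∀ (s t : SGETriple S) (ε : Pth V Ed),
     WFP S ε → rngP S ε = srcP S s.1.2.2 → t.1.1 = compP s.1.2.2 ε →
       sgeToRaw S (mul (some s) (some t)) =
         some (compP s.1.1 (actP S s.1.2.1 ε), phiP S s.1.2.1 ε * t.1.2.1, t.1.2.2)) ∧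
  (∀ (s t : SGETriple S) (ε : Pth V Ed),
     WFP S ε → rngP S ε = srcP S t.1.1 → s.1.2.2 = compP t.1.1 ε →
       sgeToRaw S (mul (some s) (some t)) =
         some (s.1.1, s.1.2.1 * (phiP S t.1.2.1⁻¹ ε)⁻¹,
               compP t.1.2.2 (actP S t.1.2.1⁻¹ ε))) ∧
  (∀ (s t : SGETriple S),
     (¬∃ ε, WFP S ε ∧ rngP S ε = srcP S s.1.2.2 ∧ t.1.1 = compP s.1.2.2 ε) →
     (¬∃ ε, WFP S ε ∧ rngP S ε = srcP S t.1.1 ∧ s.1.2.2 = compP t.1.1 ε) →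
       mul (some s) (some t) = none)

/-- Topological freeness of the standard action of `S_{G,E}` on `E^∞`: for every
nonzero `s = (α, g, β)`, every interior fixed point `ζ` of `s` satisfies `α = β`
and `ζ ∈ Z(ατ)` for some `τ` strongly fixed by `g`. -/
def TopFree (S : SelfSimGraph G V Ed) (act : G → (ℕ → Ed) → ℕ → Ed) : Prop :=
  ∀ (α : Pth V Ed) (g : G) (β : Pth V Ed),
    WFP S α → WFP S β → srcP S α = S.actV g (srcP S β) →
    ∀ ζ : InfPath S, ζ ∈ @interior (InfPath S) (infTop S) (FixSet S act α g β) →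
      α = β ∧ ∃ τ : Pth V Ed, WFP S τ ∧ rngP S τ = srcP S α ∧
        StronglyFixed S g τ ∧ InZ S (compP α τ) ζ.1

/-!
If a `G`-circuit `(g, γ)` has no entry, every vertex met by an infinite path from `r(γ)` is
simple, so `Z(r(γ))` is a single point; it is then an open set of fixed points of
`(γ, g, r(γ))`, which topological freeness forbids. If `g ≠ 1` fixes all of `Z(x)`, then
`(x, g, x)` fixes an open set, and pseudo freeness excludes a path strongly fixed by `g`.

Conversely, let `(α, g, β)` fix a cylinder around `ζ = βψ`. If `|α| = |β|`, then `α = β`, `g`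
fixes a cylinder `Z(ψ|ₙ)` around `ψ`, and condition (2) forces `φ(g, ψ|ₙ) = 1`. Otherwise every
path near `ψ` is a fixed point of a contraction `χ ↦ ε(h·χ)` with `|ε| ≥ 1`, so `ψ` is its only
fixed point; but an entry of the `G`-circuit `(h, ε)` recurs along `ψ`, and branching off there
gives a second fixed point near `ψ`.
-/

namespace SelfSimGraph

variable (S : SelfSimGraph G V Ed)

theorem phi_one (e : Ed) : S.phi 1 e = 1 := by
  have h := S.phi_cocycle 1 1 e
  rwa [one_mul, S.actE_one, left_eq_mul] at h

theorem actV_inv_actV (g : G) (x : V) : S.actV g⁻¹ (S.actV g x) = x := by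
  rw [← S.actV_mul, inv_mul_cancel, S.actV_one]

theorem actE_actE_inv (g : G) (e : Ed) : S.actE g (S.actE g⁻¹ e) = e := by
  rw [← S.actE_mul, mul_inv_cancel, S.actE_one]

theorem simpleVtx_actV {x : V} (g : G) (h : SimpleVtx S x) : SimpleVtx S (S.actV g x) := by
  obtain ⟨e, he, hu⟩ := h
  refine ⟨S.actE g e, (S.r_act g e).trans (congrArg _ he), fun y (hy : S.r y = _) => ?_⟩
  rw [← hu (S.actE g⁻¹ y) (show S.r _ = x by rw [S.r_act, hy, actV_inv_actV]), actE_actE_inv]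

theorem simpleVtx_actV_iff (g : G) (x : V) : SimpleVtx S (S.actV g x) ↔ SimpleVtx S x :=
  ⟨fun h => S.actV_inv_actV g x ▸ S.simpleVtx_actV g⁻¹ h, S.simpleVtx_actV g⟩

end SelfSimGraph

section FinitePaths

variable (S : SelfSimGraph G V Ed)

theorem lenP_actP (g : G) (p : Pth V Ed) : lenP (actP S g p) = lenP p := by
  induction p generalizing g with
  | nil x => rfl
  | cons e q ih => simp [actP, lenP, ih]

theorem rngP_actP (g : G) (p : Pth V Ed) : rngP S (actP S g p) = S.actV g (rngP S p) := by
  cases p with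
  | nil x => rfl
  | cons e q => exact S.r_act g e

theorem srcP_actP (g : G) (p : Pth V Ed) : srcP S (actP S g p) = S.actV g (srcP S p) := by
  induction p generalizing g with
  | nil x => rfl
  | cons e q ih => simp [actP, srcP, ih, S.phi_vertex]

theorem wfp_actP (g : G) {p : Pth V Ed} (h : WFP S p) : WFP S (actP S g p) := by
  induction p generalizing g with
  | nil x => trivial
  | cons e q ih => exact ⟨by rw [S.d_act, rngP_actP, h.1, S.phi_vertex], ih _ h.2⟩

theorem actP_one (p : Pth V Ed) : actP S 1 p = p := by
  induction p with
  | nil x => simp [actP, S.actV_one]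
  | cons e q ih => simp [actP, S.actE_one, S.phi_one, ih]

theorem actP_mul (g h : G) (p : Pth V Ed) :
    actP S (g * h) p = actP S g (actP S h p) := by
  induction p generalizing g h with
  | nil x => simp [actP, S.actV_mul]
  | cons e q ih => simp [actP, S.actE_mul, S.phi_cocycle, ih]

theorem phiP_vertex (g : G) (p : Pth V Ed) (x : V) :
    S.actV (phiP S g p) x = S.actV g x := by
  induction p generalizing g with
  | nil y => rfl
  | cons e q ih => simp [phiP, ih, S.phi_vertex]

theorem noEntry_actP (g : G) {p : Pth V Ed} (h : NoEntry S p) : NoEntry S (actP S g p) := by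
  induction p generalizing g with
  | nil x => trivial
  | cons e q ih => exact ⟨by rw [S.d_act]; exact S.simpleVtx_actV g h.1, ih _ h.2⟩

theorem lenP_compP (p q : Pth V Ed) : lenP (compP p q) = lenP q + lenP p := by
  induction p with
  | nil x => rfl
  | cons e r ih => simp [compP, lenP, ih, Nat.add_assoc]

theorem actP_compP (g : G) (p q : Pth V Ed) :
    actP S g (compP p q) = compP (actP S g p) (actP S (phiP S g p) q) := by
  induction p generalizing g with
  | nil x => rfl
  | cons e r ih => simp [compP, actP, phiP, ih]

theorem simpleVtx_srcP_of_noEntry {p : Pth V Ed} (hw : WFP S p) (hn : NoEntry S p)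
    (hl : 1 ≤ lenP p) : SimpleVtx S (srcP S p) := by
  induction p with
  | nil x => simp [lenP] at hl
  | cons e q ih =>
    cases q with
    | nil x => exact (show S.d e = x from hw.1) ▸ hn.1
    | cons f r => exact ih hw.2 hn.2 (by simp [lenP])

theorem eq_of_noEntry {p q : Pth V Ed} (hp : WFP S p) (hn : NoEntry S p)
    (hs : SimpleVtx S (rngP S p)) (hq : WFP S q) (hl : lenP q = lenP p)
    (hr : rngP S q = rngP S p) : q = p := by
  induction p generalizing q with
  | nil x =>
    cases q with
    | nil y => exact congrArg Pth.nil hr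
    | cons f q => simp [lenP] at hl
  | cons e p ih =>
    cases q with
    | nil y => simp [lenP] at hl
    | cons f q =>
      obtain ⟨_, -, hu⟩ := hs
      have hfe : f = e := (hu f hr).trans (hu e rfl).symm
      subst hfe
      rw [ih hp.2 hn.2 (hp.1 ▸ hn.1) hq.2 (by simpa [lenP] using hl) (hq.1.symm.trans hp.1)]

end FinitePaths

section InfinitePaths

variable (S : SelfSimGraph G V Ed)

theorem lenP_takeP (ξ : ℕ → Ed) (n : ℕ) : lenP (takeP S ξ n) = n := by
  induction n generalizing ξ with
  | zero => rfl
  | succ k ih => simp [takeP, lenP, ih]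

theorem rngP_takeP (ξ : ℕ → Ed) (n : ℕ) : rngP S (takeP S ξ n) = S.r (ξ 0) := by
  cases n <;> rfl

theorem srcP_takeP {ξ : ℕ → Ed} (hξ : InfWF S ξ) (n : ℕ) :
    srcP S (takeP S ξ n) = S.r (ξ n) := by
  induction n generalizing ξ with
  | zero => rfl
  | succ k ih => exact ih fun i => hξ (i + 1)

theorem wfp_takeP {ξ : ℕ → Ed} (hξ : InfWF S ξ) (n : ℕ) : WFP S (takeP S ξ n) := by
  induction n generalizing ξ with
  | zero => trivial
  | succ k ih =>
    exact ⟨(hξ 0).trans (rngP_takeP S (fun i => ξ (i + 1)) k).symm, ih fun i => hξ (i + 1)⟩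

theorem noEntry_takeP_iff (ξ : ℕ → Ed) (n : ℕ) :
    NoEntry S (takeP S ξ n) ↔ ∀ i < n, SimpleVtx S (S.d (ξ i)) := by
  induction n generalizing ξ with
  | zero => simp [takeP, NoEntry]
  | succ k ih =>
    simp only [takeP, NoEntry, ih, Nat.forall_lt_succ_left]

theorem apply_eq_of_takeP_eq {ξ ψ : ℕ → Ed} {n : ℕ} (h : takeP S ξ n = takeP S ψ n)
    {m : ℕ} (hm : m < n) : ξ m = ψ m := by
  induction n generalizing ξ ψ m with
  | zero => omega
  | succ k ih =>
    simp only [takeP, Pth.cons.injEq] at h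
    cases m with
    | zero => exact h.1
    | succ j => exact ih h.2 (by omega)

theorem takeP_congr {ξ ψ : ℕ → Ed} {n : ℕ} (h : ∀ k ≤ n, ξ k = ψ k) :
    takeP S ξ n = takeP S ψ n := by
  induction n generalizing ξ ψ with
  | zero => simp [takeP, h 0 le_rfl]
  | succ k ih =>
    simp only [takeP, h 0 (Nat.zero_le _), ih fun i hi => h (i + 1) (by omega)]

theorem funext_takeP {ξ ψ : ℕ → Ed} (h : ∀ n, takeP S ξ n = takeP S ψ n) : ξ = ψ :=
  funext fun m => apply_eq_of_takeP_eq S (h (m + 1)) m.lt_succ_self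

theorem infWF_dropSeq {ξ : ℕ → Ed} (h : InfWF S ξ) (n : ℕ) : InfWF S (dropSeq n ξ) :=
  fun i => by simpa [dropSeq, Nat.add_right_comm] using h (i + n)

theorem prepSeq_add_lenP (p : Pth V Ed) (ξ : ℕ → Ed) (m : ℕ) :
    prepSeq p ξ (m + lenP p) = ξ m := by
  induction p with
  | nil x => rfl
  | cons e r ih => exact ih

theorem dropSeq_prepSeq (p : Pth V Ed) (ξ : ℕ → Ed) : dropSeq (lenP p) (prepSeq p ξ) = ξ :=
  funext (prepSeq_add_lenP p ξ)

theorem prepSeq_injective (p : Pth V Ed) : Function.Injective (prepSeq (Ed := Ed) p) :=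
  fun ξ ψ h => by rw [← dropSeq_prepSeq p ξ, h, dropSeq_prepSeq]

theorem prepSeq_of_lt {p : Pth V Ed} {m : ℕ} (h : m < lenP p) (ξ ψ : ℕ → Ed) :
    prepSeq p ξ m = prepSeq p ψ m := by
  induction p generalizing m with
  | nil x => simp [lenP] at h
  | cons e r ih =>
    cases m with
    | zero => rfl
    | succ k => exact ih (by simp [lenP] at h; omega)

theorem prepSeq_congr (p : Pth V Ed) {ξ ψ : ℕ → Ed} {N : ℕ} (h : ∀ k < N, ξ k = ψ k)
    {m : ℕ} (hm : m < lenP p + N) : prepSeq p ξ m = prepSeq p ψ m := by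
  rcases Nat.lt_or_ge m (lenP p) with hlt | hge
  · exact prepSeq_of_lt hlt ξ ψ
  · obtain ⟨k, rfl⟩ := Nat.exists_eq_add_of_le' hge
    rw [prepSeq_add_lenP, prepSeq_add_lenP, h k (by omega)]

theorem prepSeq_compP (p q : Pth V Ed) (ξ : ℕ → Ed) :
    prepSeq (compP p q) ξ = prepSeq p (prepSeq q ξ) := by
  induction p with
  | nil x => rfl
  | cons e r ih => funext n; cases n <;> simp [prepSeq, compP, ih]

theorem prepSeq_takeP_dropSeq (ξ : ℕ → Ed) (n : ℕ) :
    prepSeq (takeP S ξ n) (dropSeq n ξ) = ξ := by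
  induction n generalizing ξ with
  | zero => rfl
  | succ k ih =>
    funext m
    cases m with
    | zero => rfl
    | succ j => exact congrFun (ih fun i => ξ (i + 1)) j

theorem takeP_prepSeq (p : Pth V Ed) (ξ : ℕ → Ed) (m : ℕ) :
    takeP S (prepSeq p ξ) (lenP p + m) = compP p (takeP S ξ m) := by
  induction p with
  | nil x => simp [lenP, compP, prepSeq]
  | cons e r ih =>
    rw [lenP, Nat.add_right_comm]
    exact congrArg (Pth.cons e) ih

theorem takeP_prepSeq_lenP {p : Pth V Ed} {ξ : ℕ → Ed} (h : S.r (ξ 0) = srcP S p) :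
    takeP S (prepSeq p ξ) (lenP p) = p := by
  induction p with
  | nil x => exact congrArg Pth.nil h
  | cons e r ih => exact congrArg (Pth.cons e) (ih h)

theorem r_prepSeq_zero {p : Pth V Ed} {ξ : ℕ → Ed} (h : S.r (ξ 0) = srcP S p) :
    S.r (prepSeq p ξ 0) = rngP S p := by
  rw [← rngP_takeP S _ (lenP p), takeP_prepSeq_lenP S h]

theorem infWF_prepSeq {p : Pth V Ed} {ξ : ℕ → Ed} (hp : WFP S p) (hξ : InfWF S ξ)
    (h : S.r (ξ 0) = srcP S p) : InfWF S (prepSeq p ξ) := by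
  induction p with
  | nil x => exact hξ
  | cons e r ih =>
    rintro (_ | i)
    · exact hp.1.trans (r_prepSeq_zero S (p := r) h).symm
    · exact ih hp.2 h i

noncomputable def pathFrom (hNS : ∀ x : V, ∃ e : Ed, S.r e = x) (e : Ed) : ℕ → Ed :=
  fun n => Nat.rec e (fun _ e' => (hNS (S.d e')).choose) n

theorem infWF_pathFrom (hNS : ∀ x : V, ∃ e : Ed, S.r e = x) (e : Ed) :
    InfWF S (pathFrom S hNS e) :=
  fun i => ((hNS (S.d (pathFrom S hNS e i))).choose_spec).symm

end InfinitePaths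

section Action

variable (S : SelfSimGraph G V Ed) {act : G → (ℕ → Ed) → ℕ → Ed}

theorem act_zero (hact : ActSpec S act) (g : G) (ξ : ℕ → Ed) :
    act g ξ 0 = S.actE g (ξ 0) := by
  have h := hact g ξ 1
  simp only [takeP, actP, Pth.cons.injEq] at h
  exact h.1

theorem act_one (hact : ActSpec S act) (ξ : ℕ → Ed) : act 1 ξ = ξ :=
  funext_takeP S fun n => by rw [hact, actP_one]

theorem act_mul (hact : ActSpec S act) (g h : G) (ξ : ℕ → Ed) :
    act (g * h) ξ = act g (act h ξ) :=
  funext_takeP S fun n => by rw [hact, hact, hact, actP_mul]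

theorem act_prepSeq (hact : ActSpec S act) (g : G) (p : Pth V Ed) (ξ : ℕ → Ed) :
    act g (prepSeq p ξ) = prepSeq (actP S g p) (act (phiP S g p) ξ) := by
  funext m
  refine apply_eq_of_takeP_eq S (n := lenP p + (m + 1)) ?_ (by omega)
  conv_rhs => rw [← lenP_actP S g p]
  rw [hact, takeP_prepSeq, actP_compP, takeP_prepSeq, hact]

theorem act_apply (hact : ActSpec S act) (g : G) (ξ : ℕ → Ed) (m : ℕ) :
    act g ξ m = S.actE (phiP S g (takeP S ξ m)) (ξ m) := by
  have h := prepSeq_add_lenP (actP S g (takeP S ξ m))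
    (act (phiP S g (takeP S ξ m)) (dropSeq m ξ)) 0
  rw [← act_prepSeq S hact, prepSeq_takeP_dropSeq, act_zero S hact, lenP_actP, lenP_takeP,
    Nat.zero_add] at h
  simpa [dropSeq] using h

theorem r_act_apply (hact : ActSpec S act) (g : G) (ξ : ℕ → Ed) (m : ℕ) :
    S.r (act g ξ m) = S.actV g (S.r (ξ m)) := by
  rw [act_apply S hact, S.r_act, phiP_vertex]

theorem infWF_act (hact : ActSpec S act) (g : G) {ξ : ℕ → Ed} (hξ : InfWF S ξ) :
    InfWF S (act g ξ) := fun i => by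
  rw [act_apply S hact, S.d_act, phiP_vertex, hξ, ← r_act_apply S hact]

theorem act_congr (hact : ActSpec S act) (g : G) {ξ ψ : ℕ → Ed} {n : ℕ}
    (h : ∀ k < n, ξ k = ψ k) {m : ℕ} (hm : m < n) : act g ξ m = act g ψ m := by
  rw [act_apply S hact, act_apply S hact, h m hm,
    takeP_congr S fun k (hk : k ≤ m) => h k (by omega)]

end Action

section Topology

variable (S : SelfSimGraph G V Ed)

theorem isOpen_setOf_r_zero_eq (x : V) :
    @IsOpen (InfPath S) (infTop S) {η | S.r (η.1 0) = x} := by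
  let _ : TopologicalSpace Ed := ⊥
  have : DiscreteTopology Ed := ⟨rfl⟩
  exact ⟨_, (continuous_apply 0).isOpen_preimage {e : Ed | S.r e = x} (isOpen_discrete _), rfl⟩

theorem exists_cylinder_subset_of_mem_interior {A : Set (InfPath S)} {ζ : InfPath S}
    (h : ζ ∈ @interior (InfPath S) (infTop S) A) :
    ∃ N : ℕ, ∀ (ψ : ℕ → Ed) (hψ : InfWF S ψ),
      (∀ k < N, ψ k = ζ.1 k) → (⟨ψ, hψ⟩ : InfPath S) ∈ A := by
  let _ : TopologicalSpace Ed := ⊥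
  let _ : TopologicalSpace (InfPath S) := infTop S
  obtain ⟨U, hUA, hUo, hζU⟩ := mem_interior.mp h
  obtain ⟨W, hWo, rfl⟩ := isOpen_induced_iff.mp hUo
  obtain ⟨I, u, hIu, hsub⟩ := isOpen_pi_iff.mp hWo ζ.1 hζU
  refine ⟨I.sup id + 1, fun ψ hψ hag => hUA (hsub fun a ha => ?_)⟩
  show ψ a ∈ u a
  rw [hag a (Nat.lt_succ_of_le (Finset.le_sup (f := id) ha))]
  exact (hIu a ha).2

end Topology

section NecessaryConditions

variable (S : SelfSimGraph G V Ed) {act : G → (ℕ → Ed) → ℕ → Ed}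

theorem PseudoFree.eq_one_of_stronglyFixed (hpf : PseudoFree S) {g : G} {τ : Pth V Ed}
    (h : StronglyFixed S g τ) : g = 1 := by
  obtain ⟨-, hact, hphi⟩ := h
  induction τ generalizing g with
  | nil x => exact hphi
  | cons e p ih =>
    simp only [actP, Pth.cons.injEq] at hact
    exact hpf g e hact.1 (ih hact.2 hphi)

theorem simpleVtx_rngP_of_noEntry {g : G} {γ : Pth V Ed} (hγ : GCircuit S g γ)
    (hn : NoEntry S γ) : SimpleVtx S (rngP S γ) :=
  (S.simpleVtx_actV_iff g _).mp (hγ.2.2 ▸ simpleVtx_srcP_of_noEntry S hγ.1 hn hγ.2.1)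

theorem takeP_eq_actP_of_noEntry {g : G} {γ : Pth V Ed} (hγ : GCircuit S g γ)
    (hn : NoEntry S γ) {η : ℕ → Ed} (hη : InfWF S η) (h : G)
    (hr : S.r (η 0) = S.actV h (rngP S γ)) : takeP S η (lenP γ) = actP S h γ :=
  eq_of_noEntry S (wfp_actP S h hγ.1) (noEntry_actP S h hn)
    (by rw [rngP_actP, S.simpleVtx_actV_iff]; exact simpleVtx_rngP_of_noEntry S hγ hn)
    (wfp_takeP S hη _) (by rw [lenP_takeP, lenP_actP]) (by rw [rngP_takeP, hr, rngP_actP])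

theorem eq_of_noEntry_of_r_eq {g : G} {γ : Pth V Ed} (hγ : GCircuit S g γ)
    (hn : NoEntry S γ) {η η' : ℕ → Ed} (hη : InfWF S η) (hη' : InfWF S η')
    (hr : S.r (η 0) = rngP S γ) (hr' : S.r (η' 0) = rngP S γ) : η = η' := by
  -- paths from `h · r(γ)` start with `h · γ` and continue from `(h * g) · r(γ)`
  suffices key : ∀ m (h : G) (η η' : ℕ → Ed), InfWF S η → InfWF S η' →
      S.r (η 0) = S.actV h (rngP S γ) → S.r (η' 0) = S.actV h (rngP S γ) → η m = η' m from
    funext fun m => key m 1 η η' hη hη' (by rw [hr, S.actV_one]) (by rw [hr', S.actV_one])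
  intro m
  induction m using Nat.strong_induction_on with
  | _ m ih =>
    intro h η η' hη hη' hr hr'
    have htake := takeP_eq_actP_of_noEntry S hγ hn hη h hr
    have htake' := takeP_eq_actP_of_noEntry S hγ hn hη' h hr'
    rcases Nat.lt_or_ge m (lenP γ) with hlt | hge
    · exact apply_eq_of_takeP_eq S (htake.trans htake'.symm) hlt
    · obtain ⟨k, rfl⟩ := Nat.exists_eq_add_of_le' hge
      have hnext {ζ : ℕ → Ed} (hζ : InfWF S ζ) (ht : takeP S ζ (lenP γ) = actP S h γ) :
          S.r (dropSeq (lenP γ) ζ 0) = S.actV (h * g) (rngP S γ) := by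
        rw [S.actV_mul, ← hγ.2.2, ← srcP_actP, ← ht, srcP_takeP S hζ, dropSeq, Nat.zero_add]
      exact ih k (by have := hγ.2.1; omega) (h * g) _ _ (infWF_dropSeq S hη _)
        (infWF_dropSeq S hη' _) (hnext hη htake) (hnext hη' htake')

theorem TopFree.eq_and_stronglyFixed_of_cylinder_subset (hTF : TopFree S act)
    (hNS : ∀ x : V, ∃ e : Ed, S.r e = x) {α β : Pth V Ed} {g : G} (hα : WFP S α)
    (hβ : WFP S β) (hsrc : srcP S α = S.actV g (srcP S β)) {x : V}
    (hfix : ∀ η : InfPath S, S.r (η.1 0) = x → η ∈ FixSet S act α g β) :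
    α = β ∧ ∃ τ, StronglyFixed S g τ := by
  let ζ : InfPath S := ⟨pathFrom S hNS (hNS x).choose, infWF_pathFrom S hNS _⟩
  have hζ : ζ ∈ @interior (InfPath S) (infTop S) (FixSet S act α g β) :=
    @interior_maximal _ (infTop S) _ _ hfix (isOpen_setOf_r_zero_eq S x) ζ (hNS x).choose_spec
  obtain ⟨hαβ, τ, -, -, hτ, -⟩ := hTF α g β hα hβ hsrc ζ hζ
  exact ⟨hαβ, τ, hτ⟩

theorem TopFree.not_noEntry (hact : ActSpec S act) (hTF : TopFree S act)
    (hNS : ∀ x : V, ∃ e : Ed, S.r e = x) {g : G} {γ : Pth V Ed} (hγ : GCircuit S g γ) :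
    ¬NoEntry S γ := by
  intro hn
  have hfix (η : InfPath S) (hη : S.r (η.1 0) = rngP S γ) :
      η ∈ FixSet S act γ g (Pth.nil (rngP S γ)) := by
    have hr : S.r (act g η.1 0) = srcP S γ := by rw [r_act_apply S hact, hη, hγ.2.2]
    refine ⟨congrArg Pth.nil hη, eq_of_noEntry_of_r_eq S hγ hn ?_ η.2 ?_ hη⟩
    · exact infWF_prepSeq S hγ.1 (infWF_act S hact g η.2) hr
    · exact r_prepSeq_zero S hr
  have hlen := congrArg lenP
    (hTF.eq_and_stronglyFixed_of_cylinder_subset S hNS (β := Pth.nil _) hγ.1 trivial hγ.2.2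
      hfix).1
  have := hγ.2.1
  simp only [lenP] at hlen
  omega

theorem TopFree.exists_act_ne (hact : ActSpec S act) (hTF : TopFree S act)
    (hNS : ∀ x : V, ∃ e : Ed, S.r e = x) (hpf : PseudoFree S) {g : G} (hg : g ≠ 1) (x : V) :
    ∃ ζ : ℕ → Ed, InfWF S ζ ∧ rngInf S ζ = x ∧ act g ζ ≠ ζ := by
  by_contra! hfix
  have hgx : S.actV g x = x := by
    have hr : S.r (pathFrom S hNS (hNS x).choose 0) = x := (hNS x).choose_spec
    have h0 := r_act_apply S hact g (pathFrom S hNS (hNS x).choose) 0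
    rwa [hfix _ (infWF_pathFrom S hNS _) hr, hr, eq_comm] at h0
  obtain ⟨-, τ, hτ⟩ := hTF.eq_and_stronglyFixed_of_cylinder_subset S hNS
    (α := Pth.nil x) (β := Pth.nil x) trivial trivial hgx.symm
    fun η hη => ⟨congrArg Pth.nil hη, hfix η.1 η.2 hη⟩
  exact hg (hpf.eq_one_of_stronglyFixed S hτ)

end NecessaryConditions

section SufficientConditions

variable (S : SelfSimGraph G V Ed) {act : G → (ℕ → Ed) → ℕ → Ed}

theorem eq_of_eq_prepSeq_act (hact : ActSpec S act) {h : G} {ε : Pth V Ed}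
    (hε : 1 ≤ lenP ε) {ξ ψ : ℕ → Ed} (hξ : ξ = prepSeq ε (act h ξ))
    (hψ : ψ = prepSeq ε (act h ψ)) : ξ = ψ := by
  funext m
  induction m using Nat.strong_induction_on with
  | _ m ih =>
    calc ξ m = prepSeq ε (act h ξ) m := congrFun hξ m
      _ = prepSeq ε (act h ψ) m :=
        prepSeq_congr ε (N := m + 1 - lenP ε)
          (fun k hk => act_congr S hact h (fun j hj => ih j (by omega)) hk) (by omega)
      _ = ψ m := (congrFun hψ m).symm

theorem simpleVtx_d_mul_lenP_add_iff (hact : ActSpec S act) {h : G} {ε : Pth V Ed}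
    {ψ : ℕ → Ed} (hψ : ψ = prepSeq ε (act h ψ)) (M i : ℕ) :
    SimpleVtx S (S.d (ψ (M * lenP ε + i))) ↔ SimpleVtx S (S.d (ψ i)) := by
  induction M with
  | zero => simp
  | succ M ih =>
    have hshift : ψ ((M + 1) * lenP ε + i) = act h ψ (M * lenP ε + i) := by
      rw [Nat.succ_mul, Nat.add_right_comm]
      exact (congrFun hψ _).trans (prepSeq_add_lenP ε _ _)
    rw [hshift, act_apply S hact, S.d_act, S.simpleVtx_actV_iff, ih]

theorem false_of_forall_near_eq_prepSeq_act (hact : ActSpec S act)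
    (hNS : ∀ x : V, ∃ e : Ed, S.r e = x)
    (hentry : ∀ (g : G) (γ : Pth V Ed), GCircuit S g γ → ¬NoEntry S γ)
    {ψ : ℕ → Ed} (hψ : InfWF S ψ) {L : ℕ} (hL : 1 ≤ L) (h : G) (M : ℕ)
    (hfix : ∀ χ, InfWF S χ → (∀ k < M, χ k = ψ k) →
      χ = prepSeq (takeP S ψ L) (act h χ)) :
    False := by
  set ε := takeP S ψ L
  have hlen : lenP ε = L := lenP_takeP S ψ L
  have hψε : ψ = prepSeq ε (act h ψ) := hfix ψ hψ fun _ _ => rfl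
  have hGC : GCircuit S h ε := by
    refine ⟨wfp_takeP S hψ L, hlen ▸ hL, ?_⟩
    have hψL : ψ L = act h ψ 0 := by
      have h0 := prepSeq_add_lenP ε (act h ψ) 0
      rw [Nat.zero_add, hlen] at h0
      exact (congrFun hψε L).trans h0
    rw [srcP_takeP S hψ, hψL, r_act_apply S hact, rngP_takeP]
  obtain ⟨i, hi, hns⟩ : ∃ i < L, ¬SimpleVtx S (S.d (ψ i)) := by
    simpa [ε, noEntry_takeP_iff] using hentry h ε hGC
  -- the entry of `(h, ε)` at `i` recurs at `K`, beyond the cylinder of depth `M`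
  set K := M * L + i
  have hMK : M ≤ K := Nat.le_add_right_of_le (Nat.le_mul_of_pos_right M hL)
  have hnsK : ¬SimpleVtx S (S.d (ψ K)) := fun hK =>
    hns ((simpleVtx_d_mul_lenP_add_iff S hact hψε M i).mp (by rwa [hlen]))
  obtain ⟨e', hre', hne'⟩ : ∃ e', S.r e' = S.d (ψ K) ∧ e' ≠ ψ (K + 1) := by
    by_contra! hall
    exact hnsK ⟨ψ (K + 1), (hψ K).symm, hall⟩
  set χ := prepSeq (takeP S ψ (K + 1)) (pathFrom S hNS e')
  have hχ : InfWF S χ := infWF_prepSeq S (wfp_takeP S hψ _) (infWF_pathFrom S hNS e')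
    (by rw [srcP_takeP S hψ, ← hψ K]; exact hre')
  have hχψ : ∀ k < M, χ k = ψ k := fun k hk =>
    (prepSeq_of_lt (by rw [lenP_takeP]; omega) _ (dropSeq (K + 1) ψ)).trans
      (congrFun (prepSeq_takeP_dropSeq S ψ (K + 1)) k)
  have hχK : χ (K + 1) = e' := by
    have h0 := prepSeq_add_lenP (takeP S ψ (K + 1)) (pathFrom S hNS e') 0
    rwa [lenP_takeP, Nat.zero_add] at h0
  exact hne' (hχK.symm.trans
    (congrFun (eq_of_eq_prepSeq_act S hact (hlen ▸ hL) (hfix χ hχ hχψ) hψε) (K + 1)))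

theorem forall_near_prepSeq_act_eq_of_mem_interior {α β : Pth V Ed} {g : G} {ζ : InfPath S}
    (hζ : ζ ∈ @interior (InfPath S) (infTop S) (FixSet S act α g β)) :
    takeP S ζ.1 (lenP β) = β ∧ ∃ N, ∀ χ, InfWF S χ →
      (∀ k < N, χ k = dropSeq (lenP β) ζ.1 k) → prepSeq α (act g χ) = prepSeq β χ := by
  have hβ : takeP S ζ.1 (lenP β) = β := (@interior_subset _ (infTop S) _ ζ hζ).1
  obtain ⟨N, hN⟩ := exists_cylinder_subset_of_mem_interior S hζ
  refine ⟨hβ, N + 1, fun χ hχ hag => ?_⟩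
  have hζβ := prepSeq_takeP_dropSeq S ζ.1 (lenP β)
  rw [hβ] at hζβ
  have hr : S.r (χ 0) = srcP S β := by
    rw [hag 0 (Nat.succ_pos N)]
    show S.r (ζ.1 (0 + lenP β)) = _
    rw [Nat.zero_add, ← srcP_takeP S ζ.2, hβ]
  have hmem := hN (prepSeq β χ) (infWF_prepSeq S (hβ ▸ wfp_takeP S ζ.2 _) hχ hr)
    fun k hk => (prepSeq_congr β hag (by omega)).trans (congrFun hζβ k)
  simpa only [FixSet, sActSeq, dropSeq_prepSeq] using hmem.2

theorem forall_near_eq_prepSeq_act_of_lenP_eq_add {α β : Pth V Ed} {g : G} {ψ : ℕ → Ed}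
    {N k : ℕ} (hk : lenP α = lenP β + k) (hα : takeP S (prepSeq β ψ) (lenP α) = α)
    (hN : ∀ χ, InfWF S χ → (∀ j < N, χ j = ψ j) →
      prepSeq α (act g χ) = prepSeq β χ) :
    ∀ χ, InfWF S χ → (∀ j < N, χ j = ψ j) → χ = prepSeq (takeP S ψ k) (act g χ) := by
  rw [hk, takeP_prepSeq] at hα
  intro χ hχ hag
  have h := hN χ hχ hag
  rw [← hα, prepSeq_compP] at h
  exact (prepSeq_injective β h).symm

theorem exists_forall_near_eq_prepSeq_act_of_lenP_eq_add (hact : ActSpec S act)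
    {α β : Pth V Ed} {g : G} {ψ : ℕ → Ed} {N k : ℕ} (hψ : InfWF S ψ)
    (hk : lenP β = lenP α + k) (hβ : takeP S (prepSeq β ψ) (lenP β) = β)
    (hN : ∀ χ, InfWF S χ → (∀ j < N, χ j = ψ j) →
      prepSeq α (act g χ) = prepSeq β χ) :
    ∃ h : G, ∀ χ, InfWF S χ → (∀ j < N, χ j = ψ j) →
      χ = prepSeq (takeP S ψ k) (act h χ) := by
  rw [← hN ψ hψ fun _ _ => rfl, hk, takeP_prepSeq] at hβ
  refine ⟨phiP S g⁻¹ (takeP S (act g ψ) k), fun χ hχ hag => ?_⟩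
  have h := hN χ hχ hag
  rw [← hβ, prepSeq_compP] at h
  calc χ = act g⁻¹ (act g χ) := by rw [← act_mul S hact, inv_mul_cancel, act_one S hact]
    _ = prepSeq (actP S g⁻¹ (takeP S (act g ψ) k))
          (act (phiP S g⁻¹ (takeP S (act g ψ) k)) χ) := by
      rw [prepSeq_injective α h, act_prepSeq S hact]
    _ = _ := by rw [← hact, ← act_mul S hact, inv_mul_cancel, act_one S hact]

theorem eq_and_forall_near_act_eq_of_lenP_eq {α β : Pth V Ed} {g : G} {ψ : ℕ → Ed} {N : ℕ}
    (hlen : lenP α = lenP β) (hα : takeP S (prepSeq β ψ) (lenP α) = α)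
    (hβ : takeP S (prepSeq β ψ) (lenP β) = β)
    (hN : ∀ χ, InfWF S χ → (∀ j < N, χ j = ψ j) →
      prepSeq α (act g χ) = prepSeq β χ) :
    α = β ∧ ∀ χ, InfWF S χ → (∀ j < N, χ j = ψ j) → act g χ = χ := by
  obtain rfl : α = β := hα.symm.trans (by rw [hlen, hβ])
  exact ⟨rfl, fun χ hχ hag => prepSeq_injective α (hN χ hχ hag)⟩

theorem stronglyFixed_takeP_of_forall_near_act_eq (hact : ActSpec S act)
    (hmove : ∀ g : G, g ≠ 1 → ∀ x : V,
      ∃ ζ : ℕ → Ed, InfWF S ζ ∧ rngInf S ζ = x ∧ act g ζ ≠ ζ)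
    {g : G} {ψ : ℕ → Ed} {N : ℕ} (hψ : InfWF S ψ)
    (hfix : ∀ χ, InfWF S χ → (∀ j < N, χ j = ψ j) → act g χ = χ) :
    StronglyFixed S g (takeP S ψ N) := by
  have hτ : actP S g (takeP S ψ N) = takeP S ψ N := by rw [← hact, hfix ψ hψ fun _ _ => rfl]
  refine ⟨wfp_takeP S hψ N, hτ, ?_⟩
  by_contra hne
  obtain ⟨χ, hχ, hrχ, hne'⟩ := hmove _ hne (srcP S (takeP S ψ N))
  have hτχ := hfix (prepSeq (takeP S ψ N) χ) (infWF_prepSeq S (wfp_takeP S hψ N) hχ hrχ)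
    fun j hj => (prepSeq_of_lt (by rwa [lenP_takeP]) χ (dropSeq N ψ)).trans
      (congrFun (prepSeq_takeP_dropSeq S ψ N) j)
  rw [act_prepSeq S hact, hτ] at hτχ
  exact hne' (prepSeq_injective _ hτχ)

theorem topFree_of_not_noEntry_of_exists_act_ne (hact : ActSpec S act)
    (hNS : ∀ x : V, ∃ e : Ed, S.r e = x)
    (hentry : ∀ (g : G) (γ : Pth V Ed), GCircuit S g γ → ¬NoEntry S γ)
    (hmove : ∀ g : G, g ≠ 1 → ∀ x : V,
      ∃ ζ : ℕ → Ed, InfWF S ζ ∧ rngInf S ζ = x ∧ act g ζ ≠ ζ) :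
    TopFree S act := by
  intro α g β _ _ hsrc ζ hζ
  obtain ⟨hζβ, N, hN⟩ := forall_near_prepSeq_act_eq_of_mem_interior S hζ
  have hψ := infWF_dropSeq S ζ.2 (lenP β)
  have hrψ : S.r (dropSeq (lenP β) ζ.1 0) = srcP S β := by
    show S.r (ζ.1 (0 + lenP β)) = _
    rw [Nat.zero_add, ← srcP_takeP S ζ.2, hζβ]
  have hζψ := prepSeq_takeP_dropSeq S ζ.1 (lenP β)
  rw [hζβ] at hζψ
  generalize dropSeq (lenP β) ζ.1 = ψ at hψ hrψ hζψ hN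
  have hβ' : takeP S (prepSeq β ψ) (lenP β) = β := hζψ ▸ hζβ
  have hα' : takeP S (prepSeq β ψ) (lenP α) = α := by
    rw [← hN ψ hψ fun _ _ => rfl]
    exact takeP_prepSeq_lenP S (by rw [r_act_apply S hact, hrψ, hsrc])
  rcases Nat.lt_trichotomy (lenP α) (lenP β) with hlt | hlen | hgt
  · obtain ⟨h, hh⟩ := exists_forall_near_eq_prepSeq_act_of_lenP_eq_add S hact hψ
      (Nat.add_sub_of_le hlt.le).symm hβ' hN
    exact (false_of_forall_near_eq_prepSeq_act S hact hNS hentry hψ (by omega) h N hh).elim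
  · obtain ⟨rfl, hfix⟩ := eq_and_forall_near_act_eq_of_lenP_eq S hlen hα' hβ' hN
    refine ⟨rfl, takeP S ψ N, wfp_takeP S hψ N, by rw [rngP_takeP, hrψ],
      stronglyFixed_takeP_of_forall_near_act_eq S hact hmove hψ hfix, ?_⟩
    show takeP S ζ.1 (lenP (compP α (takeP S ψ N))) = _
    rw [← hζψ, lenP_compP, lenP_takeP, Nat.add_comm, takeP_prepSeq]
  · exact (false_of_forall_near_eq_prepSeq_act S hact hNS hentry hψ (by omega)
      g N (forall_near_eq_prepSeq_act_of_lenP_eq_add S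
        (Nat.add_sub_of_le hgt.le).symm hα' hN)).elim

end SufficientConditions

theorem statement18_general {G V Ed : Type} [Group G]
    (S : SelfSimGraph G V Ed) (hNoSources : ∀ x : V, ∃ e : Ed, S.r e = x)
    (hpf : PseudoFree S)
    (act : G → (ℕ → Ed) → ℕ → Ed) (hact : ActSpec S act) :
    TopFree S act ↔
      ((∀ (g : G) (γ : Pth V Ed), GCircuit S g γ → ¬NoEntry S γ) ∧
       (∀ g : G, g ≠ 1 → ∀ x : V,
          ∃ ζ : ℕ → Ed, InfWF S ζ ∧ rngInf S ζ = x ∧ act g ζ ≠ ζ)) :=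
  ⟨fun hTF => ⟨fun _ _ hγ => hTF.not_noEntry S hact hNoSources hγ,
      fun _ hg => hTF.exists_act_ne S hact hNoSources hpf hg⟩,
    fun ⟨hentry, hmove⟩ =>
      topFree_of_not_noEntry_of_exists_act_ne S hact hNoSources hentry hmove⟩

/-- If `(G,E,φ)` is pseudo free, the standard action of `S_{G,E}` on `E^∞` is
topologically free iff (1) every `G`-circuit has an entry, and (2) for every
`g ≠ 1` and every vertex `x` there is `ζ ∈ Z(x)` with `g·ζ ≠ ζ`. -/
theorem statement18 {G V Ed : Type} [Group G] [Fintype V] [Fintype Ed]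
    (S : SelfSimGraph G V Ed) (hNoSources : ∀ x : V, ∃ e : Ed, S.r e = x)
    (hpf : PseudoFree S)
    (act : G → (ℕ → Ed) → ℕ → Ed) (hact : ActSpec S act) :
    TopFree S act ↔
      ((∀ (g : G) (γ : Pth V Ed), GCircuit S g γ → ¬NoEntry S γ) ∧
       (∀ g : G, g ≠ 1 → ∀ x : V,
          ∃ ζ : ℕ → Ed, InfWF S ζ ∧ rngInf S ζ = x ∧ act g ζ ≠ ζ)) :=
  statement18_general S hNoSources hpf act hact
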